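/- Suppose Z is a random vector in ℝ^{d_z}, V is a real random variable with atomless (continuous) distribution and cumulative distribution function F_V, h : ℝ^{d_z} × ℝ → ℝ is measurable and strictly increasing in its second argument, X = h(Z, V), and V is independent of Z. Then the conditional rank satisfies F_{X|Z}(X | Z) = F_V(V) almost surely, where F_{X|Z}(·|z) is a regular conditional distribution function of X given Z = z. -/

import Mathlib

open MeasureTheory ProbabilityTheory Filter Topology Set

/-- `F` is a regular conditional distribution function of the real random variable `X` given
the random element `Z`: for each conditioning value `z`, `F z` is monotone and
right-continuous, `F · x` is measurable, and `fun ω => F (Z ω) x` is a version of the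
conditional probability `P(X ≤ x | σ(Z))` for every `x`. -/
def IsRegCondCDF {Ω ζ : Type*} [MeasurableSpace Ω] [MeasurableSpace ζ]
    (μ : MeasureTheory.Measure Ω) (X : Ω → ℝ) (Z : Ω → ζ) (F : ζ → ℝ → ℝ) : Prop :=
  (∀ z, Monotone (F z)) ∧
  (∀ z x, ContinuousWithinAt (F z) (Set.Ici x) x) ∧
  (∀ x, Measurable fun z => F z x) ∧
  (∀ x : ℝ, (fun ω => F (Z ω) x)
    =ᵐ[μ] μ[Set.indicator {ω | X ω ≤ x} (fun _ => (1 : ℝ))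
      | MeasurableSpace.comap Z inferInstance])

/-! Independence makes the conditional law of `V` given `Z = z` the unconditional law `ρ` of `V`,
so `P(X ≤ x | Z)` is `ρ {v | h(Z, v) ≤ x}`, the distribution function of the image of `ρ` under
`h(Z, ·)`. A regular conditional distribution function agrees with it at every rational `x`
almost surely, hence everywhere since both are right-continuous. Evaluating at `x = h(Z, V)`
and using that `h(Z, ·)` is strictly increasing gives `ρ (-∞, V]`. -/

section CondDistrib

variable {Ω ζ β : Type*} [MeasurableSpace Ω] [MeasurableSpace ζ] [MeasurableSpace β]
  [StandardBorelSpace β] [Nonempty β] {μ : Measure Ω} [IsFiniteMeasure μ]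
  {Z : Ω → ζ} {V : Ω → β}

lemma condDistrib_ae_eq_const_of_indepFun (hZ : Measurable Z) (hV : Measurable V)
    (hindep : IndepFun V Z μ) :
    condDistrib V Z μ =ᵐ[μ.map Z] Kernel.const ζ (μ.map V) :=
  condDistrib_ae_eq_of_measure_eq_compProd Z hV.aemeasurable <| by
    rw [Measure.compProd_const]
    exact (indepFun_iff_map_prod_eq_prod_map_map hZ.aemeasurable hV.aemeasurable).1 hindep.symm

lemma condExp_indicator_preimage_prodMk_ae_eq_of_indepFun (hZ : Measurable Z)
    (hV : Measurable V) (hindep : IndepFun V Z μ) {S : Set (ζ × β)} (hS : MeasurableSet S) :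
    μ[((fun ω => (Z ω, V ω)) ⁻¹' S).indicator (fun _ => (1 : ℝ)) | MeasurableSpace.comap Z ‹_›]
      =ᵐ[μ] fun ω => (μ.map V).real (Prod.mk (Z ω) ⁻¹' S) := by
  have hS_int : Integrable (fun ω => S.indicator (1 : ζ × β → ℝ) (Z ω, V ω)) μ :=
    (integrable_const (1 : ℝ)).indicator (hS.preimage (hZ.prodMk hV))
  filter_upwards [condExp_prod_ae_eq_integral_condDistrib hZ hV.aemeasurable
      (stronglyMeasurable_one.indicator hS) hS_int,
    ae_of_ae_map hZ.aemeasurable (condDistrib_ae_eq_const_of_indepFun hZ hV hindep)]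
    with ω hω hκ
  refine hω.trans ?_
  rw [hκ, Kernel.const_apply, ← integral_indicator_one (measurable_prodMk_left hS)]
  rfl

end CondDistrib

lemma eq_of_continuousWithinAt_Ici_of_forall_rat_eq {α : Type*} [TopologicalSpace α]
    [T2Space α] {f g : ℝ → α} {x : ℝ} (hf : ContinuousWithinAt f (Ici x) x)
    (hg : ContinuousWithinAt g (Ici x) x) (hfg : ∀ q : ℚ, f q = g q) : f x = g x := by
  obtain ⟨u, -, hux, hu⟩ := Real.exists_seq_rat_strictAnti_tendsto x
  have hu' : Tendsto (fun n => (u n : ℝ)) atTop (𝓝[≥] x) :=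
    tendsto_nhdsWithin_of_tendsto_nhds_of_eventually_within _ hu
      (Eventually.of_forall fun n => (hux n).le)
  exact tendsto_nhds_unique (hf.tendsto.comp hu')
    (by simpa [Function.comp_def, hfg] using hg.tendsto.comp hu')

lemma cdf_map_apply {μ : Measure ℝ} [IsProbabilityMeasure μ] {φ : ℝ → ℝ} (hφ : Measurable φ)
    (x : ℝ) : cdf (μ.map φ) x = μ.real {v | φ v ≤ x} := by
  have := Measure.isProbabilityMeasure_map (μ := μ) hφ.aemeasurable
  rw [cdf_eq_real, measureReal_def, Measure.map_apply hφ measurableSet_Iic]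
  rfl

lemma cdf_map_apply_of_strictMono {μ : Measure ℝ} [IsProbabilityMeasure μ] {φ : ℝ → ℝ}
    (hφ : StrictMono φ) (v : ℝ) : cdf (μ.map φ) (φ v) = cdf μ v := by
  simp [cdf_map_apply hφ.monotone.measurable, hφ.le_iff_le, cdf_eq_real, Iic_def]

theorem conditional_rank_eq_cdf_of_V_general
    {Ω : Type*} [MeasurableSpace Ω] (μ : Measure Ω) [IsProbabilityMeasure μ]
    {dz : ℕ} (Z : Ω → Fin dz → ℝ) (hZ : Measurable Z)
    (V : Ω → ℝ) (hV : Measurable V)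
    (h : (Fin dz → ℝ) → ℝ → ℝ)
    (hhmeas : Measurable fun p : (Fin dz → ℝ) × ℝ => h p.1 p.2)
    (hhmono : ∀ z, StrictMono (h z))
    (X : Ω → ℝ) (hX : X = fun ω => h (Z ω) (V ω))
    (hindep : IndepFun V Z μ)
    (F : (Fin dz → ℝ) → ℝ → ℝ) (hF : IsRegCondCDF μ X Z F) :
    ∀ᵐ ω ∂μ, F (Z ω) (X ω) = (μ {ω' | V ω' ≤ V ω}).toReal := by
  subst hX
  obtain ⟨-, hF_right, -, hF_condExp⟩ := hF
  have hV_law : IsProbabilityMeasure (μ.map V) := Measure.isProbabilityMeasure_map hV.aemeasurable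
  have h_rat : ∀ᵐ ω ∂μ, ∀ q : ℚ, F (Z ω) q = cdf ((μ.map V).map (h (Z ω))) q := by
    refine ae_all_iff.2 fun q => (hF_condExp q).trans ?_
    filter_upwards [condExp_indicator_preimage_prodMk_ae_eq_of_indepFun hZ hV hindep
      (S := {p | h p.1 p.2 ≤ q}) (measurableSet_le hhmeas measurable_const)] with ω hω
    exact hω.trans (cdf_map_apply (hhmono _).monotone.measurable _).symm
  filter_upwards [h_rat] with ω hω
  rw [eq_of_continuousWithinAt_Ici_of_forall_rat_eq (hF_right _ _)
    ((cdf _).right_continuous _) hω, cdf_map_apply_of_strictMono (hhmono _), cdf_eq_real,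
    measureReal_def, Measure.map_apply hV measurableSet_Iic]
  rfl

/-- If `X = h(Z, V)` with `h` strictly increasing in its second argument,
`V` independent of `Z` with atomless distribution, then the conditional rank satisfies
`F_{X|Z}(X | Z) = F_V(V)` almost surely, where `F_{X|Z}` is a regular conditional
distribution function of `X` given `Z` and `F_V` is the CDF of `V`. -/
theorem conditional_rank_eq_cdf_of_V
    {Ω : Type*} [MeasurableSpace Ω] (μ : Measure Ω) [IsProbabilityMeasure μ]
    {dz : ℕ} (Z : Ω → Fin dz → ℝ) (hZ : Measurable Z)
    (V : Ω → ℝ) (hV : Measurable V)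
    (hVatomless : ∀ v : ℝ, μ {ω | V ω = v} = 0)
    (h : (Fin dz → ℝ) → ℝ → ℝ)
    (hhmeas : Measurable fun p : (Fin dz → ℝ) × ℝ => h p.1 p.2)
    (hhmono : ∀ z, StrictMono (h z))
    (X : Ω → ℝ) (hX : X = fun ω => h (Z ω) (V ω))
    (hindep : IndepFun V Z μ)
    (F : (Fin dz → ℝ) → ℝ → ℝ) (hF : IsRegCondCDF μ X Z F) :
    ∀ᵐ ω ∂μ, F (Z ω) (X ω) = (μ {ω' | V ω' ≤ V ω}).toReal :=
  conditional_rank_eq_cdf_of_V_general μ Z hZ V hV h hhmeas hhmono X hX hindep F hF
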